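/- arXiv:2601.07406 — 2 statements merged into one kernel-verified Lean document; each statement's English description precedes it below -/
import Mathlib

section
/- Let G1, G2 be graphs and define S_s(G) = max{t ∈ ℕ : K_{s,t} ⊆ G} (with max ∅ = -∞, and S_0(G) = |G|). Then for the join G1 × G2 and any s ≥ 0: S_s(G1 × G2) = max over a + c = s of (S_a(G1) + S_c(G2)). -/
/-!
Sorting the vertices of a copy of `K_{s,t}` in `G1 × G2` by the side of the join they lie on
splits it into copies of `K_{a,b}` in `G1` and `K_{c,d}` in `G2` with `a + c = s` and
`b + d = t`; conversely two such copies glue back together, because every edge between the two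
sides is present in the join. Taking maxima over `t` gives the formula, with `⊥ + x = ⊥` playing
the role of `-∞ + x = -∞`.
-/

open SimpleGraph

/-- The join (product) of two graphs: disjoint union plus all cross edges. -/
def gJoin {α β : Type*} (G : SimpleGraph α) (H : SimpleGraph β) : SimpleGraph (α ⊕ β) where
  Adj u v := match u, v with
    | Sum.inl a, Sum.inl b => G.Adj a b
    | Sum.inr a, Sum.inr b => H.Adj a b
    | _, _ => True
  symm := by constructor; rintro (a|a) (b|b) h <;> simp_all <;> exact h.symm
  loopless := by
    constructor
    rintro (a|a) h
    · exact G.loopless.irrefl a h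
    · exact H.loopless.irrefl a h

/-- `H` is contained in `G` as a (not necessarily induced) subgraph. -/
def Contains {β α : Type*} (H : SimpleGraph β) (G : SimpleGraph α) : Prop :=
  ∃ f : H →g G, Function.Injective f

/-- The complete bipartite graph `K_{s,t}`. -/
def KBip (s t : ℕ) : SimpleGraph (Fin s ⊕ Fin t) := completeBipartiteGraph (Fin s) (Fin t)

/-- A cograph: a graph with no induced path on four vertices. -/
def IsCograph {α : Type*} (G : SimpleGraph α) : Prop :=
  IsEmpty (pathGraph 4 ↪g G)

/-- The biclique-sequence: the largest t with K_{s,t} ⊆ G, or ⊥ (= -∞) if none. -/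
noncomputable def bicliqueSeq {α : Type*} (G : SimpleGraph α) (s : ℕ) : WithBot ℕ :=
  sSup {x : WithBot ℕ | ∃ t : ℕ, x = (t : WithBot ℕ) ∧ Contains (KBip s t) G}

open Finset

lemma contains_kBip_iff {α : Type*} (G : SimpleGraph α) (s t : ℕ) :
    Contains (KBip s t) G ↔ ∃ A B : Finset α, #A = s ∧ #B = t ∧ G.IsCompleteBetween A B := by
  constructor
  · rintro ⟨f, hf⟩
    let e : Fin s ⊕ Fin t ↪ α := ⟨f, hf⟩
    refine ⟨univ.map (Function.Embedding.inl.trans e), univ.map (Function.Embedding.inr.trans e),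
      by simp, by simp, ?_⟩
    simp only [IsCompleteBetween, coe_map, coe_univ, Set.image_univ, Set.forall_mem_range]
    intro i j
    exact f.map_adj (by simp [KBip])
  · rintro ⟨A, B, rfl, rfl, hAB⟩
    let i : Fin #A → α := fun k ↦ ((A.equivFinOfCardEq rfl).symm k : α)
    let j : Fin #B → α := fun k ↦ ((B.equivFinOfCardEq rfl).symm k : α)
    have hadj (k l) : G.Adj (i k) (j l) := hAB (Subtype.prop _) (Subtype.prop _)
    refine ⟨⟨Sum.elim i j, ?_⟩, ?_⟩
    · rintro (k | k) (l | l) h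
      · simp [KBip] at h
      · exact hadj k l
      · exact (hadj l k).symm
      · simp [KBip] at h
    · refine Function.Injective.sumElim ?_ ?_ fun k l ↦ (hadj k l).ne
      · exact Subtype.val_injective.comp (A.equivFinOfCardEq rfl).symm.injective
      · exact Subtype.val_injective.comp (B.equivFinOfCardEq rfl).symm.injective

section Join

variable {α β : Type*} (G1 : SimpleGraph α) (G2 : SimpleGraph β)

lemma isCompleteBetween_gJoin_iff (A B : Finset (α ⊕ β)) :
    (gJoin G1 G2).IsCompleteBetween A B ↔
      G1.IsCompleteBetween A.toLeft B.toLeft ∧ G2.IsCompleteBetween A.toRight B.toRight := by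
  constructor
  · intro h
    exact ⟨fun x hx y hy ↦ h (mem_toLeft.mp hx) (mem_toLeft.mp hy),
      fun x hx y hy ↦ h (mem_toRight.mp hx) (mem_toRight.mp hy)⟩
  · rintro ⟨h1, h2⟩ (x | x) hx (y | y) hy
    · exact h1 (mem_toLeft.mpr hx) (mem_toLeft.mpr hy)
    · trivial
    · trivial
    · exact h2 (mem_toRight.mpr hx) (mem_toRight.mpr hy)

lemma contains_kBip_gJoin_iff (s t : ℕ) :
    Contains (KBip s t) (gJoin G1 G2) ↔ ∃ a b c d : ℕ, a + c = s ∧ b + d = t ∧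
      Contains (KBip a b) G1 ∧ Contains (KBip c d) G2 := by
  simp only [contains_kBip_iff]
  constructor
  · rintro ⟨A, B, rfl, rfl, hAB⟩
    obtain ⟨h1, h2⟩ := (isCompleteBetween_gJoin_iff G1 G2 A B).mp hAB
    exact ⟨_, _, _, _, card_toLeft_add_card_toRight, card_toLeft_add_card_toRight,
      ⟨_, _, rfl, rfl, h1⟩, ⟨_, _, rfl, rfl, h2⟩⟩
  · rintro ⟨a, b, c, d, rfl, rfl, ⟨A1, B1, rfl, rfl, h1⟩, ⟨A2, B2, rfl, rfl, h2⟩⟩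
    refine ⟨A1.disjSum A2, B1.disjSum B2, card_disjSum .., card_disjSum .., ?_⟩
    rw [isCompleteBetween_gJoin_iff]
    simpa only [toLeft_disjSum, toRight_disjSum] using ⟨h1, h2⟩

end Join

section BicliqueSeq

variable {α : Type*} [Fintype α] {G : SimpleGraph α} {s t : ℕ}

lemma Contains.kBip_right_le_card (h : Contains (KBip s t) G) : t ≤ Fintype.card α := by
  obtain ⟨A, B, -, rfl, -⟩ := (contains_kBip_iff G s t).mp h
  exact card_le_univ B

lemma card_mem_upperBounds_bicliqueSeq_set (G : SimpleGraph α) (s : ℕ) :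
    (Fintype.card α : WithBot ℕ) ∈
      upperBounds {x : WithBot ℕ | ∃ t : ℕ, x = (t : WithBot ℕ) ∧ Contains (KBip s t) G} := by
  rintro _ ⟨t, rfl, h⟩
  exact_mod_cast h.kBip_right_le_card

lemma le_bicliqueSeq (h : Contains (KBip s t) G) : (t : WithBot ℕ) ≤ bicliqueSeq G s :=
  le_csSup ⟨_, card_mem_upperBounds_bicliqueSeq_set G s⟩ ⟨t, rfl, h⟩

lemma bicliqueSeq_le_card (G : SimpleGraph α) (s : ℕ) :
    bicliqueSeq G s ≤ Fintype.card α :=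
  csSup_le' (card_mem_upperBounds_bicliqueSeq_set G s)

lemma bicliqueSeq_eq_bot_or_exists (G : SimpleGraph α) (s : ℕ) :
    bicliqueSeq G s = ⊥ ∨ ∃ t : ℕ, Contains (KBip s t) G ∧ bicliqueSeq G s = t := by
  rw [bicliqueSeq]
  set S := {x : WithBot ℕ | ∃ t : ℕ, x = (t : WithBot ℕ) ∧ Contains (KBip s t) G}
  rcases S.eq_empty_or_nonempty with hS | hS
  · exact .inl (by rw [hS, csSup_empty])
  · have hfin : S.Finite := by
      refine ((Set.finite_Iic (Fintype.card α)).image ((↑) : ℕ → WithBot ℕ)).subset ?_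
      rintro _ ⟨t, rfl, h⟩
      exact ⟨t, h.kBip_right_le_card, rfl⟩
    obtain ⟨t, ht, h⟩ := hS.csSup_mem hfin
    exact .inr ⟨t, h, ht⟩

end BicliqueSeq

section JoinBicliqueSeq

variable {α β : Type*} [Fintype α] [Fintype β] (G1 : SimpleGraph α) (G2 : SimpleGraph β)

lemma bicliqueSeq_add_le_bicliqueSeq_gJoin (a c : ℕ) :
    bicliqueSeq G1 a + bicliqueSeq G2 c ≤ bicliqueSeq (gJoin G1 G2) (a + c) := by
  obtain h1 | ⟨b, hb, h1⟩ := bicliqueSeq_eq_bot_or_exists G1 a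
  · simp [h1]
  obtain h2 | ⟨d, hd, h2⟩ := bicliqueSeq_eq_bot_or_exists G2 c
  · simp [h2]
  rw [h1, h2]
  exact_mod_cast le_bicliqueSeq
    ((contains_kBip_gJoin_iff G1 G2 _ _).mpr ⟨a, b, c, d, rfl, rfl, hb, hd⟩)

lemma exists_bicliqueSeq_gJoin_le (s : ℕ) : ∃ a c : ℕ, a + c = s ∧
    bicliqueSeq (gJoin G1 G2) s ≤ bicliqueSeq G1 a + bicliqueSeq G2 c := by
  obtain h | ⟨t, ht, h⟩ := bicliqueSeq_eq_bot_or_exists (gJoin G1 G2) s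
  · exact ⟨s, 0, add_zero s, by simp [h]⟩
  obtain ⟨a, b, c, d, hac, rfl, hb, hd⟩ := (contains_kBip_gJoin_iff G1 G2 s t).mp ht
  refine ⟨a, c, hac, ?_⟩
  rw [h]
  push_cast
  exact add_le_add (le_bicliqueSeq hb) (le_bicliqueSeq hd)

end JoinBicliqueSeq

theorem bicliqueSeq_join {α β : Type*} [Fintype α] [Fintype β]
    (G1 : SimpleGraph α) (G2 : SimpleGraph β) (s : ℕ) :
    bicliqueSeq (gJoin G1 G2) s =
      sSup {x : WithBot ℕ | ∃ a c : ℕ, a + c = s ∧ x = bicliqueSeq G1 a + bicliqueSeq G2 c} := by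
  set R := {x : WithBot ℕ | ∃ a c : ℕ, a + c = s ∧ x = bicliqueSeq G1 a + bicliqueSeq G2 c}
  have hR : BddAbove R := ⟨Fintype.card α + Fintype.card β, by
    rintro _ ⟨a, c, -, rfl⟩
    exact add_le_add (bicliqueSeq_le_card G1 a) (bicliqueSeq_le_card G2 c)⟩
  obtain ⟨a, c, hac, hle⟩ := exists_bicliqueSeq_gJoin_le G1 G2 s
  refine le_antisymm (hle.trans (le_csSup hR ⟨a, c, hac, rfl⟩)) (csSup_le' ?_)
  rintro _ ⟨a, c, rfl, rfl⟩
  exact bicliqueSeq_add_le_bicliqueSeq_gJoin G1 G2 a c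
end

section
/- For every even natural number n and every d with 0 ≤ d < n, there exists a d-regular cograph on n vertices. -/
open SimpleGraph

/-!
Cographs are closed under complement, because `P₄` is self-complementary, and under disjoint
union, because an induced `P₄` is connected. On `n` vertices complementation turns a `d`-regular
graph into an `(n - 1 - d)`-regular one, so for even `n` it suffices to treat `2d < n`. Then either
`n = 2(d + 1)`, and two disjoint copies of `K_{d+1}` work, or `n` splits into two even parts
exceeding `d` (the smaller one being the least even number above `d`), and we recurse on both.
-/

-- The complement of the path 0-1-2-3 is the path 2-0-3-1.
def pathGraphFourIsoCompl : pathGraph 4 ≃g (pathGraph 4)ᶜ := by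
  refine ⟨⟨![1, 3, 0, 2], ![2, 0, 3, 1], by decide, by decide⟩, ?_⟩
  intro a b
  simp only [compl_adj, pathGraph_adj]
  revert a b; decide

section Cograph

variable {V W : Type*} {G : SimpleGraph V} {H : SimpleGraph W}

def IsInducedP4 (G : SimpleGraph V) (a b c d : V) : Prop :=
  G.Adj a b ∧ G.Adj b c ∧ G.Adj c d ∧ ¬G.Adj a c ∧ ¬G.Adj b d ∧ ¬G.Adj a d

theorem isCograph_iff_forall_not_isInducedP4 :
    IsCograph G ↔ ∀ a b c d, ¬IsInducedP4 G a b c d := by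
  constructor
  · rintro h a b c d ⟨hab, hbc, hcd, hac, hbd, had⟩
    have hinj : Function.Injective ![a, b, c, d] := by
      intro i j hij
      fin_cases i <;> fin_cases j <;> simp at hij ⊢ <;> subst hij <;> simp_all [G.adj_comm]
    refine h.false ⟨⟨![a, b, c, d], hinj⟩, fun {i j} => ?_⟩
    fin_cases i <;> fin_cases j <;> simp [pathGraph_adj, G.adj_comm, *]
  · intro h
    refine ⟨fun f => h (f 0) (f 1) (f 2) (f 3) ?_⟩
    simp only [IsInducedP4, f.map_adj_iff, pathGraph_adj]
    decide

theorem IsCograph.comap (f : G ↪g H) (hH : IsCograph H) : IsCograph G :=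
  ⟨fun g => hH.false (f.comp g)⟩

theorem IsCograph.compl (hG : IsCograph G) : IsCograph Gᶜ :=
  ⟨fun f => hG.false (Embedding.complEquiv.symm (f.comp pathGraphFourIsoCompl.symm.toEmbedding))⟩

theorem isCograph_bot : IsCograph (⊥ : SimpleGraph V) :=
  isCograph_iff_forall_not_isInducedP4.2 fun _ _ _ _ h => h.1

theorem IsCograph.sum (hG : IsCograph G) (hH : IsCograph H) : IsCograph (G ⊕g H) := by
  rw [isCograph_iff_forall_not_isInducedP4] at *
  rintro (a | a) (b | b) (c | c) (d | d) h <;>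
    first | exact hG a b c d h | exact hH a b c d h | simp [IsInducedP4] at h

end Cograph

section Regular

variable {V W : Type*}

theorem natCard_neighborSet_compl [Fintype V] (G : SimpleGraph V) (v : V) :
    Nat.card (Gᶜ.neighborSet v) = Fintype.card V - 1 - Nat.card (G.neighborSet v) := by
  classical
  simp only [Nat.card_eq_fintype_card, card_neighborSet_eq_degree, degree_compl]

def HasRegularCograph (V : Type*) (d : ℕ) : Prop :=
  ∃ G : SimpleGraph V, IsCograph G ∧ ∀ v, Nat.card (G.neighborSet v) = d

variable {d : ℕ}

theorem hasRegularCograph_zero : HasRegularCograph V 0 :=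
  ⟨⊥, isCograph_bot, fun _ => by simp⟩

theorem HasRegularCograph.of_equiv (e : V ≃ W) (h : HasRegularCograph V d) :
    HasRegularCograph W d := by
  obtain ⟨G, hG, hreg⟩ := h
  let φ := Iso.map e G
  refine ⟨G.map e, hG.comap φ.symm.toEmbedding, fun w => ?_⟩
  rw [← φ.apply_symm_apply w, ← Nat.card_congr (φ.mapNeighborSet _), hreg]

theorem HasRegularCograph.sum (hV : HasRegularCograph V d) (hW : HasRegularCograph W d) :
    HasRegularCograph (V ⊕ W) d := by
  obtain ⟨G, hG, hGreg⟩ := hV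
  obtain ⟨H, hH, hHreg⟩ := hW
  refine ⟨G ⊕g H, hG.sum hH, ?_⟩
  rintro (v | w)
  · rw [neighborSet_sum_inl, Nat.card_image_of_injective Sum.inl_injective, hGreg]
  · rw [neighborSet_sum_inr, Nat.card_image_of_injective Sum.inr_injective, hHreg]

theorem HasRegularCograph.compl [Fintype V] (h : HasRegularCograph V d) :
    HasRegularCograph V (Fintype.card V - 1 - d) := by
  obtain ⟨G, hG, hreg⟩ := h
  exact ⟨Gᶜ, hG.compl, fun v => by rw [natCard_neighborSet_compl, hreg]⟩

theorem HasRegularCograph.fin_add {a b : ℕ} (ha : HasRegularCograph (Fin a) d)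
    (hb : HasRegularCograph (Fin b) d) : HasRegularCograph (Fin (a + b)) d :=
  (ha.sum hb).of_equiv finSumFinEquiv

theorem hasRegularCograph_fin_succ (d : ℕ) : HasRegularCograph (Fin (d + 1)) d := by
  simpa using (hasRegularCograph_zero (V := Fin (d + 1))).compl

end Regular

theorem hasRegularCograph_fin_of_even {n d : ℕ} (hn : Even n) (hd : d < n) :
    HasRegularCograph (Fin n) d := by
  induction n using Nat.strong_induction_on generalizing d with
  | _ n ih =>
  have low_degree : ∀ d, 2 * d < n → HasRegularCograph (Fin n) d := by
    intro d hdn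
    obtain rfl | hdn' : n = (d + 1) + (d + 1) ∨ 2 * d + 4 ≤ n := by
      obtain ⟨m, rfl⟩ := hn; omega
    · exact (hasRegularCograph_fin_succ d).fin_add (hasRegularCograph_fin_succ d)
    · set p := 2 * (d / 2 + 1)
      have hp : Even p := even_two_mul _
      obtain ⟨q, rfl⟩ : ∃ q, n = p + q := ⟨n - p, by omega⟩
      have hq : Even q := by simpa using hn.tsub hp
      exact (ih p (by omega) hp (by omega)).fin_add (ih q (by omega) hq (by omega))
  by_cases h : 2 * d < n
  · exact low_degree d h
  · simpa [show n - 1 - (n - 1 - d) = d by omega] using (low_degree (n - 1 - d) (by omega)).compl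

theorem regular_cograph_even (n d : ℕ) (hn : Even n) (hd : d < n) :
    ∃ G : SimpleGraph (Fin n), IsCograph G ∧ ∀ v : Fin n, Nat.card (G.neighborSet v) = d :=
  hasRegularCograph_fin_of_even hn hd
end
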